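/- Suppose (u*,p*) satisfies L(ū,p) − L(u*,p̄) ≤ δ for all p ∈ C* with ‖p‖ ≤ M₀+1, where L(u,p) = (G+J)(u) + ⟨p,Θ(u)⟩, ⟨p,Θ(u*)⟩ ≤ 0 for all p ∈ C*, ‖p*‖ ≤ M₀, and the saddle point inequality (G+J)(ū) − (G+J)(u*) ≥ ⟨p*, −Θ(ū)⟩ holds. Then ‖Π(Θ(ū))‖ ≤ δ and −M₀δ ≤ (G+J)(ū) − (G+J)(u*) ≤ δ, where Π is projection onto C*. -/

import Mathlib

open scoped RealInnerProductSpace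

/-- `P` is the metric projection onto `S`. -/
def IsProjOn {E : Type*} [NormedAddCommGroup E] (S : Set E) (P : E → E) : Prop :=
  ∀ x, P x ∈ S ∧ ∀ y ∈ S, ‖x - P x‖ ≤ ‖x - y‖

/-- The dual cone `C* = {y : ⟨x, y⟩ ≥ 0 for all x ∈ C}`. -/
def dualCone' {E : Type*} [NormedAddCommGroup E] [InnerProductSpace ℝ E] (C : Set E) : Set E :=
  {y | ∀ x ∈ C, 0 ≤ ⟪x, y⟫}

/-!
The dual cone `K = C*` is a convex cone, so the projection `P` onto it satisfies the Moreau
relations `⟪x - P x, P x⟫ = 0` and `⟪y, x⟫ ≤ ⟪y, P x⟫` for `y ∈ K`. Testing the hypothesis with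
`p̂ = (M₀ + 1) • P x / ‖P x‖`, where `x = Θ ū`, gives `Δ + (M₀ + 1) ‖P x‖ ≤ δ` for
`Δ = f ū - f u*`, while the saddle inequality and `‖p*‖ ≤ M₀` give `Δ ≥ -M₀ ‖P x‖`.
-/

section ConvexCone

variable {E : Type*} [NormedAddCommGroup E] [InnerProductSpace ℝ E] {K : Set E} {P : E → E}

lemma convex_dualCone' (C : Set E) : Convex ℝ (dualCone' C) := by
  intro y₁ h₁ y₂ h₂ a b ha hb _ x hx
  have := h₁ x hx
  have := h₂ x hx
  simp only [inner_add_right, real_inner_smul_right]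
  positivity

lemma smul_mem_dualCone' {C : Set E} {y : E} (hy : y ∈ dualCone' C) {a : ℝ} (ha : 0 ≤ a) :
    a • y ∈ dualCone' C := by
  intro x hx
  rw [real_inner_smul_right]
  exact mul_nonneg ha (hy x hx)

namespace IsProjOn

lemma real_inner_sub_le_zero (hP : IsProjOn K P) (hK : Convex ℝ K) (x : E) {y : E}
    (hy : y ∈ K) : ⟪x - P x, y - P x⟫ ≤ 0 := by
  have : Nonempty K := ⟨⟨P x, (hP x).1⟩⟩
  have hmin : ‖x - P x‖ = ⨅ w : K, ‖x - w‖ :=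
    le_antisymm (le_ciInf fun w => (hP x).2 w w.2)
      (ciInf_le ⟨0, by rintro r ⟨w, rfl⟩; positivity⟩ (⟨P x, (hP x).1⟩ : K))
  exact (norm_eq_iInf_iff_real_inner_le_zero hK (hP x).1).mp hmin y hy

variable (hP : IsProjOn K P) (hK : Convex ℝ K)
  (hKsmul : ∀ y ∈ K, ∀ a : ℝ, 0 ≤ a → a • y ∈ K)
include hP hK hKsmul

lemma real_inner_sub_self_eq_zero (x : E) : ⟪x - P x, P x⟫ = 0 := by
  have hPx := (hP x).1
  have h₀ := hP.real_inner_sub_le_zero hK x (hKsmul _ hPx 0 le_rfl)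
  have h₂ := hP.real_inner_sub_le_zero hK x (hKsmul _ hPx 2 zero_le_two)
  rw [zero_smul, zero_sub, inner_neg_right] at h₀
  rw [two_smul, add_sub_cancel_right] at h₂
  linarith

lemma real_inner_eq_norm_sq (x : E) : ⟪P x, x⟫ = ‖P x‖ ^ 2 := by
  have h := hP.real_inner_sub_self_eq_zero hK hKsmul x
  rw [inner_sub_left, real_inner_comm] at h
  linarith [_root_.real_inner_self_eq_norm_sq (P x)]

lemma real_inner_le_real_inner_apply {y : E} (hy : y ∈ K) (x : E) : ⟪y, x⟫ ≤ ⟪y, P x⟫ := by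
  have h := hP.real_inner_sub_le_zero hK x hy
  have horth := hP.real_inner_sub_self_eq_zero hK hKsmul x
  simp only [inner_sub_left, inner_sub_right] at h horth
  linarith [real_inner_comm y x, real_inner_comm y (P x)]

lemma exists_mem_norm_le_real_inner_eq (x : E) {r : ℝ} (hr : 0 ≤ r) :
    ∃ p ∈ K, ‖p‖ ≤ r ∧ ⟪p, x⟫ = r * ‖P x‖ := by
  by_cases hPx : P x = 0
  · refine ⟨0, ?_, by simpa using hr, by simp [hPx]⟩
    simpa [hPx] using (hP x).1
  have hpos : 0 < ‖P x‖ := norm_pos_iff.mpr hPx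
  refine ⟨(r / ‖P x‖) • P x, hKsmul _ (hP x).1 _ (by positivity), le_of_eq ?_, ?_⟩
  · rw [norm_smul, Real.norm_eq_abs, abs_of_nonneg (by positivity)]
    field_simp
  · rw [real_inner_smul_left, hP.real_inner_eq_norm_sq hK hKsmul]
    field_simp

end IsProjOn

end ConvexCone

theorem stmt19_general {n m : ℕ} (C : Set (EuclideanSpace ℝ (Fin m)))
    (Proj : EuclideanSpace ℝ (Fin m) → EuclideanSpace ℝ (Fin m))
    (hProj : IsProjOn (dualCone' C) Proj)
    (f : EuclideanSpace ℝ (Fin n) → ℝ)  -- f = G + J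
    (Θ : EuclideanSpace ℝ (Fin n) → EuclideanSpace ℝ (Fin m))
    (ubar ustar : EuclideanSpace ℝ (Fin n))
    (pbar pstar : EuclideanSpace ℝ (Fin m))
    (hpbar : pbar ∈ dualCone' C) (hpstar : pstar ∈ dualCone' C)
    (M0 δ : ℝ) (hM0 : ‖pstar‖ ≤ M0)
    (hmain : ∀ p ∈ dualCone' C, ‖p‖ ≤ M0 + 1 →
      (f ubar + ⟪p, Θ ubar⟫) - (f ustar + ⟪pbar, Θ ustar⟫) ≤ δ)
    (hfeas : ∀ p ∈ dualCone' C, ⟪p, Θ ustar⟫ ≤ 0)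
    (hsaddle : ⟪pstar, -Θ ubar⟫ ≤ f ubar - f ustar) :
    ‖Proj (Θ ubar)‖ ≤ δ ∧ -(M0 * δ) ≤ f ubar - f ustar ∧ f ubar - f ustar ≤ δ := by
  have hK := convex_dualCone' C
  have hKsmul : ∀ y ∈ dualCone' C, ∀ a : ℝ, 0 ≤ a → a • y ∈ dualCone' C :=
    fun _ hy _ ha => smul_mem_dualCone' hy ha
  have hM0nn : 0 ≤ M0 := (norm_nonneg _).trans hM0
  set q := Proj (Θ ubar)
  have hq := norm_nonneg q
  obtain ⟨p, hp, hpnorm, hpinner⟩ :=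
    hProj.exists_mem_norm_le_real_inner_eq hK hKsmul (Θ ubar) (by linarith : 0 ≤ M0 + 1)
  have hupper : f ubar - f ustar + (M0 + 1) * ‖q‖ ≤ δ := by
    have := hmain p hp hpnorm
    linarith [hfeas pbar hpbar]
  have hlower : -(M0 * ‖q‖) ≤ f ubar - f ustar := by
    have := hProj.real_inner_le_real_inner_apply hK hKsmul hpstar (Θ ubar)
    have := (real_inner_le_norm pstar q).trans (mul_le_mul_of_nonneg_right hM0 hq)
    rw [inner_neg_right] at hsaddle
    linarith
  have hqδ : ‖q‖ ≤ δ := by linarith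
  exact ⟨hqδ, by linarith [mul_le_mul_of_nonneg_left hqδ hM0nn], by nlinarith⟩

theorem stmt19 {n m : ℕ} (C : Set (EuclideanSpace ℝ (Fin m))) (hCne : C.Nonempty)
    (hCclosed : IsClosed C) (hCconv : Convex ℝ C)
    (hCcone : ∀ x ∈ C, ∀ a : ℝ, 0 ≤ a → a • x ∈ C)
    (Proj : EuclideanSpace ℝ (Fin m) → EuclideanSpace ℝ (Fin m))
    (hProj : IsProjOn (dualCone' C) Proj)
    (f : EuclideanSpace ℝ (Fin n) → ℝ)  -- f = G + J
    (Θ : EuclideanSpace ℝ (Fin n) → EuclideanSpace ℝ (Fin m))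
    (ubar ustar : EuclideanSpace ℝ (Fin n))
    (pbar pstar : EuclideanSpace ℝ (Fin m))
    (hpbar : pbar ∈ dualCone' C) (hpstar : pstar ∈ dualCone' C)
    (M0 δ : ℝ) (hM0 : ‖pstar‖ ≤ M0)
    (hmain : ∀ p ∈ dualCone' C, ‖p‖ ≤ M0 + 1 →
      (f ubar + ⟪p, Θ ubar⟫) - (f ustar + ⟪pbar, Θ ustar⟫) ≤ δ)
    (hfeas : ∀ p ∈ dualCone' C, ⟪p, Θ ustar⟫ ≤ 0)
    (hsaddle : ⟪pstar, -Θ ubar⟫ ≤ f ubar - f ustar) :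
    ‖Proj (Θ ubar)‖ ≤ δ ∧ -(M0 * δ) ≤ f ubar - f ustar ∧ f ubar - f ustar ≤ δ :=
  stmt19_general C Proj hProj f Θ ubar ustar pbar pstar hpbar hpstar M0 δ hM0 hmain hfeas hsaddle
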